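/- arXiv:2406.15087 — 7 statements merged into one kernel-verified Lean document; each statement's English description precedes it below -/
import Mathlib

section
/- Let M be a k×k column-stochastic matrix with real entries, and let λ ∈ ℂ be an eigenvalue of M with |λ| = 1. Then λ is a root of unity, i.e. there exists d ≥ 1 with λ^d = 1. -/
open Finset Complex Matrix

lemma key_step {k : ℕ} (N : Matrix (Fin k) (Fin k) ℝ)
    (hnn : ∀ i j, 0 ≤ N i j) (hrow : ∀ i, ∑ j, N i j = 1)
    (lam : ℂ) (hmod : ‖lam‖ = 1)
    (w : Fin k → ℂ) (m : ℝ) (hmpos : 0 < m)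
    (hm : ∀ j, ‖w j‖ ≤ m)
    (heig : ∀ i, ∑ j, (N i j : ℂ) * w j = lam * w i)
    (i : Fin k) (hi : ‖w i‖ = m)
    (j : Fin k) (hj : 0 < N i j) :
    w j = lam * w i := by
  have habs : ‖lam * w i‖ = m := by
    rw [norm_mul, hmod, one_mul, hi]
  set z := lam * w i with hz
  set t : Fin k → ℝ := fun j => (starRingEnd ℂ z * w j).re with ht
  have htle : ∀ j, t j ≤ m * m := by
    intro j
    calc t j ≤ ‖starRingEnd ℂ z * w j‖ := Complex.re_le_norm _
      _ = m * ‖w j‖ := by rw [norm_mul, Complex.norm_conj, habs]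
      _ ≤ m * m := mul_le_mul_of_nonneg_left (hm j) hmpos.le
  have hsum : ∑ j, N i j * t j = m * m := by
    have h0 : starRingEnd ℂ z * (∑ j, (N i j : ℂ) * w j) = starRingEnd ℂ z * z := by
      rw [heig i]
    rw [Finset.mul_sum] at h0
    have hre := congrArg Complex.re h0
    rw [Complex.re_sum] at hre
    have h1 : ∀ j ∈ Finset.univ, (starRingEnd ℂ z * ((N i j : ℂ) * w j)).re = N i j * t j := by
      intro j _
      have h2 : starRingEnd ℂ z * ((N i j : ℂ) * w j) = (N i j : ℂ) * (starRingEnd ℂ z * w j) := by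
        ring
      rw [h2, Complex.re_ofReal_mul]
    rw [Finset.sum_congr rfl h1] at hre
    rw [hre]
    have h3 : (starRingEnd ℂ z * z).re = Complex.normSq z := by
      rw [← Complex.normSq_eq_conj_mul_self]; simp
    rw [h3, Complex.normSq_eq_norm_sq, habs]; ring
  have htj : t j = m * m := by
    by_contra hne
    have hlt : t j < m * m := lt_of_le_of_ne (htle j) hne
    have hs : ∑ j, N i j * t j < ∑ j, N i j * (m * m) := by
      apply Finset.sum_lt_sum
      · intro x _; exact mul_le_mul_of_nonneg_left (htle x) (hnn i x)
      · exact ⟨j, Finset.mem_univ j, mul_lt_mul_of_pos_left hlt hj⟩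
    rw [hsum, ← Finset.sum_mul, hrow i, one_mul] at hs
    exact lt_irrefl _ hs
  have habs2 : ‖starRingEnd ℂ z * w j‖ ≤ m * m := by
    rw [norm_mul, Complex.norm_conj, habs]
    exact mul_le_mul_of_nonneg_left (hm j) hmpos.le
  set u := starRingEnd ℂ z * w j with hu
  have him : u.im = 0 := by
    have h1 : u.re ^ 2 + u.im ^ 2 = ‖u‖ ^ 2 := by
      rw [Complex.sq_norm, Complex.normSq_apply]; ring
    have h2 : ‖u‖ ^ 2 ≤ (m * m) ^ 2 :=
      pow_le_pow_left₀ (norm_nonneg _) habs2 2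
    have h3 : u.re = m * m := htj
    nlinarith [sq_nonneg u.im]
  have hueq : u = ((m * m : ℝ) : ℂ) := by
    apply Complex.ext
    · simpa using htj
    · simp [him]
  have hzz : starRingEnd ℂ z * z = ((m * m : ℝ) : ℂ) := by
    rw [← Complex.normSq_eq_conj_mul_self, Complex.normSq_eq_norm_sq, habs]
    push_cast; ring
  have hzne : starRingEnd ℂ z ≠ 0 := by
    simp only [ne_eq, map_eq_zero]
    intro h
    rw [h, norm_zero] at habs
    exact absurd habs.symm hmpos.ne'
  have : starRingEnd ℂ z * w j = starRingEnd ℂ z * z := by rw [← hu, hueq, hzz]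
  exact mul_left_cancel₀ hzne this

lemma key_root {k : ℕ} (N : Matrix (Fin k) (Fin k) ℝ)
    (hnn : ∀ i j, 0 ≤ N i j) (hrow : ∀ i, ∑ j, N i j = 1)
    (lam : ℂ) (hmod : ‖lam‖ = 1)
    (w : Fin k → ℂ) (hw : w ≠ 0)
    (heig : ∀ i, ∑ j, (N i j : ℂ) * w j = lam * w i) :
    ∃ d : ℕ, 1 ≤ d ∧ lam ^ d = 1 := by
  have hne : Nonempty (Fin k) := by
    rcases Function.ne_iff.mp hw with ⟨i, -⟩
    exact ⟨i⟩
  set m : ℝ := Finset.univ.sup' (Finset.univ_nonempty) (fun i => ‖w i‖) with hmdef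
  have hm : ∀ j, ‖w j‖ ≤ m := fun j =>
    Finset.le_sup' (fun i => ‖w i‖) (Finset.mem_univ j)
  obtain ⟨i0, -, hi0⟩ := Finset.exists_mem_eq_sup' (Finset.univ_nonempty)
    (fun i => ‖w i‖)
  have hmpos : 0 < m := by
    rcases Function.ne_iff.mp hw with ⟨i, hi⟩
    calc (0:ℝ) < ‖w i‖ := by
          simpa using (norm_pos_iff.mpr (by simpa using hi))
      _ ≤ m := hm i
  have chain : ∀ n : ℕ, ∃ i, w i = lam ^ n * w i0 := by
    intro n
    induction n with
    | zero => exact ⟨i0, by simp⟩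
    | succ n ih =>
      obtain ⟨i, hi⟩ := ih
      have habsi : ‖w i‖ = m := by
        rw [hi, norm_mul, norm_pow, hmod, one_pow, one_mul, ← hi0]
      obtain ⟨j, hj⟩ : ∃ j, 0 < N i j := by
        by_contra h
        push_neg at h
        have : ∑ j, N i j = 0 := Finset.sum_eq_zero (fun j _ => le_antisymm (h j) (hnn i j))
        rw [hrow i] at this; norm_num at this
      refine ⟨j, ?_⟩
      rw [key_step N hnn hrow lam hmod w m hmpos hm heig i habsi j hj, hi]
      ring
  -- pigeonhole
  have hchoice : ∀ n : Fin (k + 1), ∃ i, w i = lam ^ (n : ℕ) * w i0 := fun n => chain n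
  choose F hF using hchoice
  obtain ⟨a, b, hab, hFab⟩ := Fintype.exists_ne_map_eq_of_card_lt F (by simp)
  have hwi0 : w i0 ≠ 0 := by
    intro h
    rw [h, norm_zero] at hi0
    exact hmpos.ne' hi0
  have hlamne : lam ≠ 0 := by
    intro h; rw [h, norm_zero] at hmod; norm_num at hmod
  have main : ∀ p q : ℕ, p < q → lam ^ p = lam ^ q → ∃ d : ℕ, 1 ≤ d ∧ lam ^ d = 1 := by
    intro p q hpq heq2
    refine ⟨q - p, by omega, ?_⟩
    have h1 : lam ^ p * lam ^ (q - p) = lam ^ p * 1 := by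
      rw [← pow_add, mul_one, show p + (q - p) = q by omega, ← heq2]
    exact mul_left_cancel₀ (pow_ne_zero _ hlamne) h1
  have heq : lam ^ (a : ℕ) * w i0 = lam ^ (b : ℕ) * w i0 := by
    rw [← hF a, ← hF b, hFab]
  have heq2 : lam ^ (a : ℕ) = lam ^ (b : ℕ) := mul_right_cancel₀ hwi0 heq
  have hne' : (a : ℕ) ≠ (b : ℕ) := fun h => hab (Fin.ext h)
  rcases hne'.lt_or_gt with h | h
  · exact main _ _ h heq2
  · exact main _ _ h heq2.symm

/-- If `M` is a `k × k` column-stochastic real matrix and `λ ∈ ℂ` is an eigenvalue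
of `M` with `|λ| = 1`, then `λ` is a root of unity: there is `d ≥ 1` with `λ ^ d = 1`. -/
theorem stmt1 {k : ℕ} (M : Matrix (Fin k) (Fin k) ℝ)
    (hnn : ∀ i j, 0 ≤ M i j) (hcol : ∀ j, ∑ i, M i j = 1)
    (lam : ℂ) (v : Fin k → ℂ) (hv : v ≠ 0)
    (heig : (M.map (fun x => (x : ℂ))).mulVec v = lam • v)
    (hmod : ‖lam‖ = 1) :
    ∃ d : ℕ, 1 ≤ d ∧ lam ^ d = 1 := by
  set A := M.map (fun x => (x : ℂ)) with hA
  have h0 : (A - lam • 1).mulVec v = 0 := by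
    rw [Matrix.sub_mulVec, Matrix.smul_mulVec, Matrix.one_mulVec, heig, sub_self]
  have hdet : (A - lam • (1 : Matrix (Fin k) (Fin k) ℂ)).det = 0 :=
    (Matrix.exists_mulVec_eq_zero_iff).mp ⟨v, hv, h0⟩
  have hdetT : (Aᵀ - lam • (1 : Matrix (Fin k) (Fin k) ℂ)).det = 0 := by
    rw [show Aᵀ - lam • (1 : Matrix (Fin k) (Fin k) ℂ) = (A - lam • 1)ᵀ by
      rw [Matrix.transpose_sub, Matrix.transpose_smul, Matrix.transpose_one]]
    rw [Matrix.det_transpose]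
    exact hdet
  obtain ⟨w, hw, hweq⟩ := (Matrix.exists_mulVec_eq_zero_iff).mpr hdetT
  have hweq' : Aᵀ.mulVec w = lam • w := by
    have := hweq
    rw [Matrix.sub_mulVec, Matrix.smul_mulVec, Matrix.one_mulVec, sub_eq_zero] at this
    exact this
  have heigw : ∀ i, ∑ j, ((Mᵀ i j : ℝ) : ℂ) * w j = lam * w i := by
    intro i
    have h1 := congrFun hweq' i
    simpa [Matrix.mulVec, dotProduct, hA, Matrix.transpose_apply,
      Matrix.map_apply, Pi.smul_apply, smul_eq_mul] using h1
  exact key_root Mᵀ (fun i j => hnn j i) (fun i => by simpa using hcol i) lam hmod w hw heigw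
end

section
/- Let M be a k×k column-stochastic matrix with real entries, and let λ ∈ ℂ be an eigenvalue of M with |λ| = 1. Then λ is a simple eigenvalue in the sense that all its generalised eigenvectors have order 1: over ℂ, the kernel of (M − λI)^2 equals the kernel of (M − λI). Equivalently, there is no vector v ∈ ℂ^k with (M − λI)^2 v = 0 and (M − λI) v ≠ 0. -/
open Finset

lemma stoch_pow {k : ℕ} (M : Matrix (Fin k) (Fin k) ℝ)
    (hnn : ∀ i j, 0 ≤ M i j) (hcol : ∀ j, ∑ i, M i j = 1) (n : ℕ) :
    (∀ i j, 0 ≤ (M ^ n) i j) ∧ (∀ j, ∑ i, (M ^ n) i j = 1) := by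
  induction n with
  | zero =>
    constructor
    · intro i j
      simp [Matrix.one_apply]
      split <;> norm_num
    · intro j
      simp [Matrix.one_apply]
  | succ n ih =>
    obtain ⟨ih1, ih2⟩ := ih
    constructor
    · intro i j
      rw [pow_succ, Matrix.mul_apply]
      exact Finset.sum_nonneg fun l _ => mul_nonneg (ih1 i l) (hnn l j)
    · intro j
      have : ∑ i, (M ^ (n+1)) i j = ∑ l, (∑ i, (M ^ n) i l) * M l j := by
        simp only [pow_succ, Matrix.mul_apply]
        rw [Finset.sum_comm]
        simp [Finset.sum_mul]
      rw [this]
      simp only [ih2, one_mul]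
      exact hcol j

/-- If `M` is a `k × k` column-stochastic real matrix and `λ ∈ ℂ` is an eigenvalue of `M`
with `|λ| = 1`, then `λ` is a simple eigenvalue: over `ℂ`, the kernel of `(M - λI)^2`
equals the kernel of `M - λI`; i.e. there is no `v` with `(M - λI)^2 v = 0` and
`(M - λI) v ≠ 0`. -/
theorem stmt2 {k : ℕ} (M : Matrix (Fin k) (Fin k) ℝ)
    (hnn : ∀ i j, 0 ≤ M i j) (hcol : ∀ j, ∑ i, M i j = 1)
    (lam : ℂ) (v : Fin k → ℂ) (hv : v ≠ 0)
    (heig : (M.map (fun x => (x : ℂ))).mulVec v = lam • v)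
    (hmod : ‖lam‖ = 1) :
    ∀ w : Fin k → ℂ,
      (((M.map (fun x => (x : ℂ)) - lam • 1) ^ 2).mulVec w = 0 →
        (M.map (fun x => (x : ℂ)) - lam • 1).mulVec w = 0) := by
  intro w h2
  by_contra hu
  set A := M.map (fun x => (x : ℂ)) with hA
  set u := (A - lam • 1).mulVec w with hudef
  have hAu : A.mulVec u = lam • u := by
    have h : (A - lam • 1).mulVec u = 0 := by
      rw [hudef, Matrix.mulVec_mulVec, ← sq]
      exact h2
    rwa [Matrix.sub_mulVec, Matrix.smul_mulVec, Matrix.one_mulVec,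
      sub_eq_zero] at h
  have hAw : A.mulVec w = lam • w + u := by
    have : u = A.mulVec w - lam • w := by
      rw [hudef, Matrix.sub_mulVec, Matrix.smul_mulVec, Matrix.one_mulVec]
    rw [this]
    abel
  -- key growth formula
  have key : ∀ n : ℕ, (A ^ (n+1)).mulVec w
      = lam ^ (n+1) • w + (((n : ℂ) + 1) * lam ^ n) • u := by
    intro n
    induction n with
    | zero => simpa using hAw
    | succ n ih =>
      have : A ^ (n+2) = A * A ^ (n+1) := pow_succ' A (n+1)
      rw [this, ← Matrix.mulVec_mulVec, ih, Matrix.mulVec_add,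
        Matrix.mulVec_smul, Matrix.mulVec_smul, hAw, hAu]
      ext i
      simp only [Pi.add_apply, Pi.smul_apply, smul_eq_mul]
      push_cast
      ring
  -- powers of A are maps of powers of M
  have hpow : ∀ n : ℕ, A ^ n = (M ^ n).map (fun x => (x : ℂ)) := by
    intro n
    induction n with
    | zero =>
      simp [Matrix.map_one]
    | succ n ih =>
      rw [pow_succ, pow_succ, ih, hA]
      ext i j
      simp [Matrix.mul_apply]
  -- boundedness
  set C : ℝ := ∑ j, ‖w j‖ with hC
  have hb : ∀ n : ℕ, ∀ i, ‖((A ^ n).mulVec w) i‖ ≤ C := by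
    intro n i
    obtain ⟨hp1, hp2⟩ := stoch_pow M hnn hcol n
    have hentry : ∀ i' j, (M ^ n) i' j ≤ 1 := by
      intro i' j
      calc (M ^ n) i' j ≤ ∑ i'', (M ^ n) i'' j :=
            Finset.single_le_sum (fun l _ => hp1 l j) (Finset.mem_univ i')
        _ = 1 := hp2 j
    rw [hpow n]
    have : ((M ^ n).map (fun x => (x : ℂ))).mulVec w i
        = ∑ j, ((M ^ n) i j : ℂ) * w j := by
      simp [Matrix.mulVec, dotProduct]
    rw [this]
    calc ‖∑ j, ((M ^ n) i j : ℂ) * w j‖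
        ≤ ∑ j, ‖((M ^ n) i j : ℂ) * w j‖ :=
          norm_sum_le _ _
      _ ≤ ∑ j, ‖w j‖ := by
          apply Finset.sum_le_sum
          intro j _
          rw [norm_mul, Complex.norm_real, Real.norm_eq_abs, abs_of_nonneg (hp1 i j)]
          calc (M ^ n) i j * ‖w j‖
              ≤ 1 * ‖w j‖ :=
                mul_le_mul_of_nonneg_right (hentry i j) (norm_nonneg _)
            _ = ‖w j‖ := one_mul _
      _ = C := rfl
  -- pick coordinate where u is nonzero
  have hune : u ≠ 0 := hu
  obtain ⟨i, hi⟩ := Function.ne_iff.mp hune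
  have hui : 0 < ‖u i‖ := by
    simpa [norm_pos_iff] using hi
  obtain ⟨N, hN⟩ := exists_nat_gt ((C + ‖w i‖) / ‖u i‖)
  have hNbig : C + ‖w i‖ < (N : ℝ) * ‖u i‖ := by
    rwa [div_lt_iff₀ hui] at hN
  -- evaluate the growth formula at i
  have hk := key N
  have hcomp : ((A ^ (N+1)).mulVec w) i
      = lam ^ (N+1) * w i + (((N : ℂ) + 1) * lam ^ N) * u i := by
    rw [hk]; simp [Pi.add_apply]
  have habs2 : ‖(((N : ℂ) + 1) * lam ^ N) * u i‖
      = ((N : ℝ) + 1) * ‖u i‖ := by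
    rw [norm_mul, norm_mul, norm_pow, hmod, one_pow, mul_one]
    congr 1
    rw [show ((N : ℂ) + 1) = ((N + 1 : ℕ) : ℂ) by push_cast; ring,
      Complex.norm_natCast]
    push_cast; ring
  have habs1 : ‖lam ^ (N+1) * w i‖ = ‖w i‖ := by
    rw [norm_mul, norm_pow, hmod, one_pow, one_mul]
  have hlow : ((N : ℝ) + 1) * ‖u i‖ - ‖w i‖
      ≤ ‖((A ^ (N+1)).mulVec w) i‖ := by
    rw [hcomp]
    have t1 : ‖((N : ℂ) + 1) * lam ^ N * u i‖
        ≤ ‖lam ^ (N+1) * w i + ((N : ℂ) + 1) * lam ^ N * u i‖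
          + ‖lam ^ (N+1) * w i‖ := by
      have h := norm_add_le
        (lam ^ (N+1) * w i + ((N : ℂ) + 1) * lam ^ N * u i) (-(lam ^ (N+1) * w i))
      simpa [norm_neg] using h
    linarith [t1, habs1, habs2]
  have hupper := hb (N+1) i
  have : (N : ℝ) * ‖u i‖ ≤ ((N : ℝ) + 1) * ‖u i‖ := by
    nlinarith [norm_nonneg (u i)]
  linarith
end

section
/- Let M be a (k+ℓ)×(k+ℓ) matrix with rational entries whose characteristic polynomial factors as X^ℓ · p(X) with p ∈ ℚ[X] and p(0) ≠ 0 (i.e. 0 is an eigenvalue of M of algebraic multiplicity exactly ℓ). Then there exist a (k+ℓ)×k rational matrix Q of rank k and an invertible k×k rational matrix B such that: (1) the characteristic polynomial of B equals p, i.e. charpoly(M) = X^ℓ · charpoly(B); (2) for every μ ∈ ℚ^{k+ℓ} there exists v ∈ ℚ^k such that M^n μ = Q B^n v for all n ≥ ℓ; and (3) for every λ ∈ ℂ with λ ≠ 0, every i ∈ ℕ, and every y ∈ ℂ^k (viewing the rational matrices as complex matrices): (B − λI)^i y = 0 if and only if (M − λI)^i (Q y) = 0. -/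
open Polynomial LinearMap Module

open Polynomial LinearMap Module

lemma charpoly_eq_mul_of_isCompl {K V : Type*} [Field K] [AddCommGroup V] [Module K V]
    [FiniteDimensional K V] (φ : Module.End K V) {p q : Submodule K V} (h : IsCompl p q)
    (hp : ∀ x ∈ p, φ x ∈ p) (hq : ∀ x ∈ q, φ x ∈ q) :
    φ.charpoly = (φ.restrict hp).charpoly * (φ.restrict hq).charpoly := by
  let F := φ.restrict hp
  let G := φ.restrict hq
  let ψ := F.prodMap G
  let e := Submodule.prodEquivOfIsCompl p q h
  let bV := Module.Free.chooseBasis K p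
  let bW := Module.Free.chooseBasis K q
  let b := bV.prod bW
  have hψ : ψ = e.symm.conj φ := by
    apply b.ext
    simp only [Basis.prod_apply, coe_inl, coe_inr, prodMap_apply, LinearEquiv.conj_apply,
      LinearEquiv.symm_symm, Submodule.coe_prodEquivOfIsCompl, coe_comp, LinearEquiv.coe_coe,
      Function.comp_apply, coprod_apply, Submodule.coe_subtype, map_add, Sum.forall, Sum.elim_inl,
      map_zero, ZeroMemClass.coe_zero, add_zero, LinearEquiv.eq_symm_apply, and_self,
      Submodule.coe_prodEquivOfIsCompl', restrict_coe_apply, implies_true, Sum.elim_inr, zero_add,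
      e, ψ, F, G, b]
  rw [← e.symm.charpoly_conj φ, ← hψ, charpoly_prodMap]



/-- Let `M` be a `(k+ℓ) × (k+ℓ)` rational matrix whose characteristic polynomial factors
as `X^ℓ * p` with `p(0) ≠ 0` (so `0` is an eigenvalue of algebraic multiplicity exactly
`ℓ`). Then there are a rank-`k` rational matrix `Q` of size `(k+ℓ) × k` and an invertible
`k × k` rational matrix `B` such that: (1) `charpoly B = p`; (2) for every
`μ ∈ ℚ^(k+ℓ)` there is `v ∈ ℚ^k` with `M^n μ = Q B^n v` for all `n ≥ ℓ`; and (3) for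
every nonzero `λ ∈ ℂ`, every `i ∈ ℕ` and every `y ∈ ℂ^k`, viewing the matrices over `ℂ`,
`(B - λI)^i y = 0` iff `(M - λI)^i (Q y) = 0`. -/
theorem stmt7 {k ℓ : ℕ} (M : Matrix (Fin (k + ℓ)) (Fin (k + ℓ)) ℚ)
    (p : Polynomial ℚ) (hfac : M.charpoly = Polynomial.X ^ ℓ * p)
    (hp0 : p.eval 0 ≠ 0) :
    ∃ (Q : Matrix (Fin (k + ℓ)) (Fin k) ℚ) (B : Matrix (Fin k) (Fin k) ℚ),
      Q.rank = k ∧ IsUnit B.det ∧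
      B.charpoly = p ∧
      (∀ μ : Fin (k + ℓ) → ℚ, ∃ v : Fin k → ℚ, ∀ n : ℕ, ℓ ≤ n →
        (M ^ n).mulVec μ = Q.mulVec ((B ^ n).mulVec v)) ∧
      (∀ lam : ℂ, lam ≠ 0 → ∀ i : ℕ, ∀ y : Fin k → ℂ,
        (((B.map (fun q => (q : ℂ))) - lam • 1) ^ i).mulVec y = 0 ↔
        (((M.map (fun q => (q : ℂ))) - lam • 1) ^ i).mulVec
          ((Q.map (fun q => (q : ℂ))).mulVec y) = 0) := by
  classical
  set pb := Pi.basisFun ℚ (Fin (k + ℓ)) with hpb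
  set φ : Module.End ℚ (Fin (k + ℓ) → ℚ) := Matrix.toLin pb pb M with hφ
  have hM : LinearMap.toMatrix pb pb φ = M := by rw [hφ, LinearMap.toMatrix_toLin]
  have hchar : φ.charpoly = M.charpoly := by rw [← hM, LinearMap.charpoly_toMatrix]
  set V0 : Submodule ℚ (Fin (k + ℓ) → ℚ) := ⨆ m : ℕ, ker (φ ^ m) with hV0
  set W : Submodule ℚ (Fin (k + ℓ) → ℚ) := ⨅ m : ℕ, range (φ ^ m) with hW
  have hVW : IsCompl V0 W := LinearMap.isCompl_iSup_ker_pow_iInf_range_pow φ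
  obtain ⟨N, hN⟩ := Filter.eventually_atTop.mp φ.eventually_iSup_ker_pow_eq
  have hV0N : V0 = ker (φ ^ N) := hV0.trans (hN N le_rfl)
  have hφV : ∀ x ∈ V0, φ x ∈ V0 := by
    rw [hV0N]
    intro x hx
    simp only [mem_ker] at hx ⊢
    rw [← Module.End.mul_apply, ← pow_succ, pow_succ', Module.End.mul_apply, hx, map_zero]
  have hφW : ∀ x ∈ W, φ x ∈ W := by
    simp only [hW, Submodule.mem_iInf, mem_range]
    intro x H m
    obtain ⟨y, rfl⟩ := H m
    exact ⟨φ y, by rw [← Module.End.mul_apply, ← pow_succ, pow_succ', Module.End.mul_apply]⟩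
  set F := φ.restrict hφV with hF
  set G := φ.restrict hφW with hG
  have hmul : φ.charpoly = F.charpoly * G.charpoly := charpoly_eq_mul_of_isCompl φ hVW hφV hφW
  have hFpow : F.charpoly = X ^ finrank ℚ V0 := by
    rw [LinearMap.charpoly_eq_X_pow_iff]
    rintro ⟨x, hx⟩
    refine ⟨N, ?_⟩
    rw [Module.End.pow_restrict]
    apply Subtype.ext
    rw [LinearMap.restrict_coe_apply, ZeroMemClass.coe_zero]
    rw [hV0N, mem_ker] at hx
    exact hx
  -- G is injective
  have hG0 : ∀ x : W, G x = 0 → x = 0 := by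
    intro x hx
    apply Subtype.ext
    suffices h : x.1 ∈ V0 ⊓ W by rwa [hVW.inf_eq_bot, Submodule.mem_bot] at h
    refine Submodule.mem_inf.mpr ⟨?_, x.2⟩
    have hx1 : φ x.1 = 0 := by
      have := congrArg (Subtype.val) hx
      rwa [LinearMap.restrict_coe_apply, ZeroMemClass.coe_zero] at this
    rw [hV0]
    exact Submodule.mem_iSup_of_mem 1 (by rwa [mem_ker, pow_one])
  have hGdet : LinearMap.det G ≠ 0 := ((not_hasEigenvalue_zero_tfae G).out 5 3).mp hG0
  have hGcc : constantCoeff G.charpoly ≠ 0 := ((not_hasEigenvalue_zero_tfae G).out 5 2).mp hG0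
  have hpne : p ≠ 0 := fun h => hp0 (by rw [h]; simp)
  have hdV : finrank ℚ V0 = ℓ := by
    have h1 : natTrailingDegree (M.charpoly) = ℓ := by
      rw [hfac, natTrailingDegree_mul (pow_ne_zero _ X_ne_zero) hpne,
        natTrailingDegree_X_pow,
        natTrailingDegree_eq_zero_of_constantCoeff_ne_zero
          (by rwa [constantCoeff_apply, coeff_zero_eq_eval_zero]), add_zero]
    have h2 : natTrailingDegree (M.charpoly) = finrank ℚ V0 := by
      rw [← hchar, hmul, natTrailingDegree_mul (charpoly_monic F).ne_zero
        (charpoly_monic G).ne_zero, hFpow, natTrailingDegree_X_pow,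
        natTrailingDegree_eq_zero_of_constantCoeff_ne_zero hGcc, add_zero]
    omega
  have hpG : G.charpoly = p := by
    have h3 : X ^ ℓ * G.charpoly = X ^ ℓ * p := by
      rw [← hfac, ← hchar, hmul, hFpow, hdV]
    exact mul_left_cancel₀ (pow_ne_zero _ X_ne_zero) h3
  have hdW : finrank ℚ W = k := by
    have h4 := Submodule.finrank_add_eq_of_isCompl hVW
    rw [hdV] at h4
    have h5 : finrank ℚ (Fin (k + ℓ) → ℚ) = k + ℓ := by
      simp [Module.finrank_pi]
    omega
  -- φ ^ ℓ kills V0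
  have hFl : F ^ ℓ = 0 := by
    have h6 := F.aeval_self_charpoly
    rw [hFpow, hdV, map_pow, aeval_X] at h6
    exact h6
  have hkill : ∀ x ∈ V0, (φ ^ ℓ) x = 0 := by
    intro x hx
    have h7 : (F ^ ℓ) ⟨x, hx⟩ = 0 := by rw [hFl]; rfl
    rw [Module.End.pow_restrict] at h7
    have := congrArg Subtype.val h7
    rwa [LinearMap.restrict_coe_apply, ZeroMemClass.coe_zero] at this
  have hrange : ∀ u, (φ ^ ℓ) u ∈ W := by
    intro u
    obtain ⟨a, ha, b, hb, hab⟩ := Submodule.mem_sup.mp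
      (by rw [hVW.sup_eq_top]; exact Submodule.mem_top :
        u ∈ V0 ⊔ W)
    rw [← hab, map_add, hkill a ha, zero_add]
    exact Module.End.pow_apply_mem_of_forall_mem ℓ hφW b hb
  set bW : Basis (Fin k) ℚ W := Module.finBasisOfFinrankEq ℚ W hdW with hbW
  set Q : Matrix (Fin (k + ℓ)) (Fin k) ℚ := LinearMap.toMatrix bW pb W.subtype with hQ
  set B : Matrix (Fin k) (Fin k) ℚ := LinearMap.toMatrix bW bW G with hB
  set L : Matrix (Fin k) (Fin (k + ℓ)) ℚ :=
    LinearMap.toMatrix pb bW (W.projectionOnto V0 hVW.symm) with hL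
  have hLQ : L * Q = 1 := by
    rw [hL, hQ, ← LinearMap.toMatrix_comp bW pb bW]
    have : (W.projectionOnto V0 hVW.symm) ∘ₗ W.subtype = LinearMap.id := by
      ext x
      simp [Submodule.projectionOnto_apply_left]
    rw [this, LinearMap.toMatrix_id]
  have hMQ1 : M * Q = Q * B := by
    rw [← hM, hQ, hB, ← LinearMap.toMatrix_comp bW pb pb, ← LinearMap.toMatrix_comp bW bW pb,
      LinearMap.subtype_comp_restrict]
    rfl
  have hMQ : ∀ m : ℕ, M ^ m * Q = Q * B ^ m := by
    intro m
    induction m with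
    | zero => simp
    | succ m ih =>
      rw [pow_succ', Matrix.mul_assoc, ih, ← Matrix.mul_assoc, hMQ1, Matrix.mul_assoc,
        ← pow_succ']
  have hQrank : Q.rank = k := by
    apply le_antisymm
    · simpa using Q.rank_le_card_width
    · have h8 : (L * Q).rank = k := by rw [hLQ, Matrix.rank_one, Fintype.card_fin]
      calc (k : ℕ) = (L * Q).rank := h8.symm
        _ ≤ Q.rank := Matrix.rank_mul_le_right L Q
  have hBdet : IsUnit B.det := by
    rw [hB, LinearMap.det_toMatrix]
    exact isUnit_iff_ne_zero.mpr hGdet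
  have hBchar : B.charpoly = p := by rw [hB, LinearMap.charpoly_toMatrix, hpG]
  have happly : ∀ (A : Matrix (Fin (k+ℓ)) (Fin (k+ℓ)) ℚ) x,
      Matrix.toLin pb pb A x = A.mulVec x := by
    intro A x
    rw [hpb, Matrix.toLin_eq_toLin', Matrix.toLin'_apply]
  have hφm : ∀ (m : ℕ) x, (φ ^ m) x = (M ^ m).mulVec x := by
    intro m x
    have h9 : LinearMap.toMatrix pb pb (φ ^ m) = M ^ m := by
      induction m with
      | zero => simp [LinearMap.toMatrix_id]
      | succ m ih => rw [pow_succ, pow_succ, LinearMap.toMatrix_mul, ih, hM]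
    have h10 := congrArg (fun A => Matrix.toLin pb pb A) h9
    simp only [Matrix.toLin_toMatrix] at h10
    rw [h10, happly]
  have prop2 : ∀ μ : Fin (k + ℓ) → ℚ, ∃ v : Fin k → ℚ, ∀ m : ℕ, ℓ ≤ m →
      (M ^ m).mulVec μ = Q.mulVec ((B ^ m).mulVec v) := by
    intro μ
    set w : W := ⟨(φ ^ ℓ) μ, hrange μ⟩ with hw
    refine ⟨(B⁻¹ ^ ℓ).mulVec (bW.repr w), fun m hm => ?_⟩
    have hcomm : Commute B B⁻¹ :=
      (Matrix.mul_nonsing_inv B hBdet).trans (Matrix.nonsing_inv_mul B hBdet).symm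
    have hBB : B ^ m * B⁻¹ ^ ℓ = B ^ (m - ℓ) := by
      have h10 : B ^ m = B ^ (m - ℓ) * B ^ ℓ := by
        rw [← pow_add, Nat.sub_add_cancel hm]
      have h11 : B ^ ℓ * B⁻¹ ^ ℓ = 1 := by
        rw [← hcomm.mul_pow, Matrix.mul_nonsing_inv B hBdet, one_pow]
      rw [h10, mul_assoc, h11, mul_one]
    have hQw : Q.mulVec (bW.repr w) = (w : Fin (k + ℓ) → ℚ) := by
      rw [hQ, LinearMap.toMatrix_mulVec_repr]
      funext i
      simp [hpb]
    rw [Matrix.mulVec_mulVec, Matrix.mulVec_mulVec, Matrix.mul_assoc, hBB, ← hMQ, ← Matrix.mulVec_mulVec, hQw]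
    have hwv : (w : Fin (k + ℓ) → ℚ) = (M ^ ℓ).mulVec μ := by rw [hw, ← hφm]
    rw [hwv, Matrix.mulVec_mulVec, ← pow_add, Nat.sub_add_cancel hm]
  have prop3 : ∀ lam : ℂ, lam ≠ 0 → ∀ i : ℕ, ∀ y : Fin k → ℂ,
      (((B.map (fun q => (q : ℂ))) - lam • 1) ^ i).mulVec y = 0 ↔
      (((M.map (fun q => (q : ℂ))) - lam • 1) ^ i).mulVec
        ((Q.map (fun q => (q : ℂ))).mulVec y) = 0 := by
    intro lam _ i y
    have hcast : (fun q : ℚ => (q : ℂ)) = ⇑(Rat.castHom ℂ) := rfl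
    have h1 : (M.map (fun q => (q : ℂ))) * (Q.map (fun q => (q : ℂ)))
        = (Q.map (fun q => (q : ℂ))) * (B.map (fun q => (q : ℂ))) := by
      rw [hcast, ← Matrix.map_mul, ← Matrix.map_mul, hMQ1]
    have h2 : (M.map (fun q => (q : ℂ)) - lam • 1) * Q.map (fun q => (q : ℂ))
        = Q.map (fun q => (q : ℂ)) * (B.map (fun q => (q : ℂ)) - lam • 1) := by
      rw [Matrix.sub_mul, Matrix.mul_sub, h1, Matrix.smul_mul, Matrix.mul_smul,
        Matrix.one_mul, Matrix.mul_one]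
    have key : ∀ j : ℕ, ((M.map (fun q => (q : ℂ)) - lam • 1) ^ j) * Q.map (fun q => (q : ℂ))
        = Q.map (fun q => (q : ℂ)) * ((B.map (fun q => (q : ℂ)) - lam • 1) ^ j) := by
      intro j
      induction j with
      | zero => rw [pow_zero, pow_zero, Matrix.one_mul, Matrix.mul_one]
      | succ j ih =>
        rw [pow_succ', Matrix.mul_assoc, ih, ← Matrix.mul_assoc, h2, Matrix.mul_assoc,
          ← pow_succ']
    have hinj : ∀ z : Fin k → ℂ, (Q.map (fun q => (q : ℂ))).mulVec z = 0 → z = 0 := by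
      intro z hz
      have h3 := congrArg (fun u => (L.map (fun q : ℚ => (q : ℂ))).mulVec u) hz
      simp only [Matrix.mulVec_zero] at h3
      rw [Matrix.mulVec_mulVec, hcast, ← Matrix.map_mul, hLQ,
        Matrix.map_one _ (by simp) (by simp), Matrix.one_mulVec] at h3
      exact h3
    constructor
    · intro h
      rw [Matrix.mulVec_mulVec, key i, ← Matrix.mulVec_mulVec, h, Matrix.mulVec_zero]
    · intro h
      apply hinj
      rw [Matrix.mulVec_mulVec, ← key i, ← Matrix.mulVec_mulVec]
      exact h
  exact ⟨Q, B, hQrank, hBdet, hBchar, prop2, prop3⟩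
end

section
/- Let B be a k×k complex matrix, λ ∈ ℂ with λ ≠ 0, c ≥ 1 an integer, i ≥ 1, and let v ∈ ℂ^k be a generalised eigenvector of order i for λ, i.e. (B − λI)^i v = 0 and (B − λI)^{i−1} v ≠ 0. Then v is a generalised eigenvector of order i of B^c for the eigenvalue λ^c, i.e. (B^c − λ^c I)^i v = 0 and (B^c − λ^c I)^{i−1} v ≠ 0. -/
/-!
Write `p - p(a) = (X - a) q`; differentiating at `a` gives `q(a) = p'(a)`. Hence
`(p(B) - p(a))^m = (B - a)^m q(B)^m`, and since `q(B)^m ≡ p'(a)^m` modulo `B - a`, on a vector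
killed by `(B - a)^(m+1)` this acts as `p'(a)^m (B - a)^m`. For `p = X^c` the scalar
`p'(a) = c a^(c-1)` is nonzero, so the order of a generalised eigenvector is preserved.
-/

open Polynomial

namespace Polynomial

variable {R : Type*} [CommRing R]

theorem exists_sub_C_eval_eq_X_sub_C_mul (p : R[X]) (a : R) :
    ∃ q : R[X], p - C (p.eval a) = (X - C a) * q ∧ q.eval a = p.derivative.eval a := by
  obtain ⟨q, hq⟩ := X_sub_C_dvd_sub_C_eval (p := p) (a := a)
  refine ⟨q, hq, ?_⟩
  have hderiv : p.derivative = q + (X - C a) * q.derivative := by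
    simpa [derivative_mul] using congrArg derivative hq
  simp [hderiv]

end Polynomial

namespace Matrix

variable {n R : Type*} [Fintype n] [DecidableEq n] [CommRing R]

theorem aeval_X_sub_C (B : Matrix n n R) (a : R) : aeval B (X - C a) = B - a • 1 := by
  simp [Algebra.algebraMap_eq_smul_one]

theorem aeval_X_sub_C_pow_mul_mulVec {B : Matrix n n R} {a : R} {v : n → R} {m : ℕ}
    (hv : ((B - a • 1) ^ (m + 1)) *ᵥ v = 0) (q : R[X]) :
    aeval B ((X - C a) ^ m * q) *ᵥ v = q.eval a • ((B - a • 1) ^ m *ᵥ v) := by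
  obtain ⟨t, ht⟩ := X_sub_C_dvd_sub_C_eval (p := q) (a := a)
  have hq : (X - C a) ^ m * q = t * (X - C a) ^ (m + 1) + C (q.eval a) * (X - C a) ^ m := by
    have hqt : q = (X - C a) * t + C (q.eval a) := by rw [← ht]; ring
    conv_lhs => rw [hqt]
    ring
  rw [hq, map_add, map_mul, map_mul, map_pow, map_pow, aeval_X_sub_C, aeval_C, add_mulVec,
    ← mulVec_mulVec, hv, mulVec_zero, zero_add, Algebra.algebraMap_eq_smul_one, smul_mul_assoc,
    one_mul, smul_mulVec]

theorem aeval_sub_eval_smul_one_pow_mulVec {B : Matrix n n R} {a : R} {v : n → R} {m : ℕ}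
    (hv : ((B - a • 1) ^ (m + 1)) *ᵥ v = 0) (p : R[X]) :
    (aeval B p - p.eval a • 1) ^ m *ᵥ v =
      p.derivative.eval a ^ m • ((B - a • 1) ^ m *ᵥ v) := by
  obtain ⟨q, hq, hqa⟩ := p.exists_sub_C_eval_eq_X_sub_C_mul a
  have hpB : aeval B p - p.eval a • 1 = aeval B ((X - C a) * q) := by
    rw [← hq, map_sub, aeval_C, Algebra.algebraMap_eq_smul_one]
  rw [hpB, ← map_pow, mul_pow, aeval_X_sub_C_pow_mul_mulVec hv, eval_pow, hqa]

theorem generalizedEigenvector_aeval {B : Matrix n n R} {a : R} {v : n → R} {i : ℕ}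
    (hi : 1 ≤ i) (h1 : ((B - a • 1) ^ i) *ᵥ v = 0) (h2 : ((B - a • 1) ^ (i - 1)) *ᵥ v ≠ 0)
    (p : R[X]) (hp : IsUnit (p.derivative.eval a)) :
    ((aeval B p - p.eval a • 1) ^ i) *ᵥ v = 0 ∧
      ((aeval B p - p.eval a • 1) ^ (i - 1)) *ᵥ v ≠ 0 := by
  have h1' : ((B - a • 1) ^ (i + 1)) *ᵥ v = 0 := by
    rw [pow_succ', ← mulVec_mulVec, h1, mulVec_zero]
  refine ⟨by rw [aeval_sub_eval_smul_one_pow_mulVec h1', h1, smul_zero], ?_⟩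
  rw [aeval_sub_eval_smul_one_pow_mulVec (by rwa [Nat.sub_add_cancel hi]), Ne,
    (hp.pow _).smul_eq_zero]
  exact h2

end Matrix

/-- Let `B` be a `k × k` complex matrix, `λ ≠ 0`, `c ≥ 1`, `i ≥ 1`, and let `v` be a
generalised eigenvector of order `i` for `λ` (i.e. `(B - λI)^i v = 0` and
`(B - λI)^(i-1) v ≠ 0`). Then `v` is a generalised eigenvector of order `i` of `B^c`
for the eigenvalue `λ^c`. -/
theorem stmt8 {k : ℕ} (B : Matrix (Fin k) (Fin k) ℂ) (lam : ℂ) (hlam : lam ≠ 0)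
    (c : ℕ) (hc : 1 ≤ c) (i : ℕ) (hi : 1 ≤ i) (v : Fin k → ℂ)
    (h1 : ((B - lam • 1) ^ i).mulVec v = 0)
    (h2 : ((B - lam • 1) ^ (i - 1)).mulVec v ≠ 0) :
    ((B ^ c - lam ^ c • 1) ^ i).mulVec v = 0 ∧
      ((B ^ c - lam ^ c • 1) ^ (i - 1)).mulVec v ≠ 0 := by
  have hderiv : IsUnit ((X ^ c : ℂ[X]).derivative.eval lam) := by
    rw [derivative_X_pow, eval_mul, eval_C, eval_pow, eval_X, isUnit_iff_ne_zero]
    exact mul_ne_zero (Nat.cast_ne_zero.mpr (by omega)) (pow_ne_zero _ hlam)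
  simpa using Matrix.generalizedEigenvector_aeval hi h1 h2 (X ^ c) hderiv
end

section
/- Let s ∈ ℚ^{k+1} be a vector with all entries strictly positive and summing to 1, let A ∈ ℚ^{k×k}, and let v ∈ ℚ^k. Then there exist a (k+1)×(k+1) column-stochastic rational matrix M with all entries strictly positive, a vector μ ∈ ℚ^{k+1} with nonnegative entries summing to 1, and rationals η > 0 and ρ > 0, such that for all n ≥ 0: M^n μ = s + η ρ^n Q A^n v, where Q is the (k+1)×k matrix whose top k×k block is the identity and whose last row is −1^⊤ (the negated all-ones row). -/
/-- The `(k+1) × k` rational matrix whose top `k × k` block is the identity and whose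
last row is `-1ᵀ`. -/
def Qmat (k : ℕ) : Matrix (Fin (k + 1)) (Fin k) ℚ :=
  Matrix.of fun i j => if (i : ℕ) = (j : ℕ) then 1 else if (i : ℕ) = k then -1 else 0

lemma Qmat_col_sum (k : ℕ) (l : Fin k) : ∑ i, Qmat k i l = 0 := by
  rw [Fin.sum_univ_castSucc]
  have h1 : ∀ i : Fin k, Qmat k i.castSucc l = if i = l then 1 else 0 := by
    intro i
    simp only [Qmat, Matrix.of_apply, Fin.coe_castSucc]
    rcases eq_or_ne i l with h | h
    · simp [h]
    · have : (i : ℕ) ≠ (l : ℕ) := fun hc => h (Fin.ext hc)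
      simp [this, h, (i.isLt.ne : (i : ℕ) ≠ k)]
  have h2 : Qmat k (Fin.last k) l = -1 := by
    have hkl : (k : ℕ) ≠ (l : ℕ) := Ne.symm (Nat.ne_of_lt l.isLt)
    simp [Qmat, hkl]
  simp [h1, h2, Finset.sum_ite_eq']

lemma sum_Qmat_mulVec (k : ℕ) (w : Fin k → ℚ) : ∑ i, (Qmat k).mulVec w i = 0 := by
  simp only [Matrix.mulVec, dotProduct]
  rw [Finset.sum_comm]
  have : ∀ l : Fin k, ∑ i, Qmat k i l * w l = 0 := by
    intro l
    rw [← Finset.sum_mul, Qmat_col_sum, zero_mul]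
  simp [this]

lemma sum_Qmat_mul {k : ℕ} {X : Type*} [Fintype X] (N : Matrix (Fin k) X ℚ) (j : X) :
    ∑ i, (Qmat k * N) i j = 0 := by
  simp only [Matrix.mul_apply]
  rw [Finset.sum_comm]
  have : ∀ l : Fin k, ∑ i, Qmat k i l * N l j = 0 := by
    intro l
    rw [← Finset.sum_mul, Qmat_col_sum, zero_mul]
  simp [this]

/-- Let `s ∈ ℚ^(k+1)` have strictly positive entries summing to `1`, let `A ∈ ℚ^(k×k)`
and `v ∈ ℚ^k`. Then there exist a column-stochastic rational matrix `M` with strictly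
positive entries, a distribution `μ ∈ ℚ^(k+1)`, and rationals `η > 0`, `ρ > 0`, such
that `M^n μ = s + η ρ^n Q A^n v` for all `n`, where `Q` has identity top block and last
row `-1ᵀ`. -/
theorem stmt13 {k : ℕ} (s : Fin (k + 1) → ℚ)
    (hspos : ∀ i, 0 < s i) (hssum : ∑ i, s i = 1)
    (A : Matrix (Fin k) (Fin k) ℚ) (v : Fin k → ℚ) :
    ∃ (M : Matrix (Fin (k + 1)) (Fin (k + 1)) ℚ) (μ : Fin (k + 1) → ℚ) (η ρ : ℚ),
      (∀ i j, 0 < M i j) ∧ (∀ j, ∑ i, M i j = 1) ∧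
      (∀ i, 0 ≤ μ i) ∧ (∑ i, μ i = 1) ∧ 0 < η ∧ 0 < ρ ∧
      ∀ n : ℕ, (M ^ n).mulVec μ =
        s + (η * ρ ^ n) • (Qmat k).mulVec ((A ^ n).mulVec v) := by
  classical
  -- centered projection P with P * Q = 1 and P s = 0
  set P : Matrix (Fin k) (Fin (k + 1)) ℚ :=
    Matrix.of (fun i j => (if (j : ℕ) = (i : ℕ) then 1 else 0) - s i.castSucc) with hPdef
  have hPQ : P * Qmat k = 1 := by
    ext i j
    simp only [Matrix.mul_apply, hPdef, Matrix.of_apply, sub_mul, Finset.sum_sub_distrib]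
    have h1 : ∀ l : Fin (k + 1),
        (if (l : ℕ) = (i : ℕ) then (1:ℚ) else 0) * Qmat k l j
          = (if l = i.castSucc then Qmat k l j else 0) := by
      intro l
      by_cases h : l = i.castSucc
      · simp [h]
      · have : (l : ℕ) ≠ (i : ℕ) := fun hc => h (Fin.ext (by simpa using hc))
        simp [this, h]
    rw [Finset.sum_congr rfl (fun l _ => h1 l)]
    have h2 : ∑ l, s i.castSucc * Qmat k l j = s i.castSucc * ∑ l, Qmat k l j := by
      rw [Finset.mul_sum]
    rw [h2, Qmat_col_sum, mul_zero, sub_zero, Finset.sum_ite_eq' Finset.univ i.castSucc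
      (fun l => Qmat k l j)]
    simp only [Finset.mem_univ, if_true]
    rcases eq_or_ne i j with h | h
    · simp [Qmat, h, Matrix.one_apply]
    · have : (i : ℕ) ≠ (j : ℕ) := fun hc => h (Fin.ext hc)
      simp [Qmat, this, Matrix.one_apply, h, (i.isLt.ne : (i : ℕ) ≠ k)]
  have hPs : P.mulVec s = 0 := by
    ext i
    simp only [Matrix.mulVec, dotProduct, hPdef, Matrix.of_apply, sub_mul,
      Finset.sum_sub_distrib, Pi.zero_apply]
    have h1 : ∀ l : Fin (k + 1),
        (if (l : ℕ) = (i : ℕ) then (1:ℚ) else 0) * s l = (if l = i.castSucc then s l else 0) := by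
      intro l
      by_cases h : l = i.castSucc
      · simp [h]
      · have : (l : ℕ) ≠ (i : ℕ) := fun hc => h (Fin.ext (by simpa using hc))
        simp [this, h]
    rw [Finset.sum_congr rfl (fun l _ => h1 l), Finset.sum_ite_eq' Finset.univ i.castSucc s]
    have h2 : ∑ l, s i.castSucc * s l = s i.castSucc * ∑ l, s l := by rw [Finset.mul_sum]
    rw [h2, hssum, mul_one]
    simp
  set B : Matrix (Fin (k + 1)) (Fin (k + 1)) ℚ := Qmat k * A * P with hBdef
  have hBs : B.mulVec s = 0 := by
    rw [hBdef, Matrix.mul_assoc, ← Matrix.mulVec_mulVec, ← Matrix.mulVec_mulVec, hPs]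
    simp
  have hBQ : ∀ w : Fin k → ℚ,
      B.mulVec ((Qmat k).mulVec w) = (Qmat k).mulVec (A.mulVec w) := by
    intro w
    rw [Matrix.mulVec_mulVec, hBdef, Matrix.mul_assoc (Qmat k * A) P (Qmat k), hPQ, Matrix.mul_one,
      ← Matrix.mulVec_mulVec]
  -- bounds
  have hne : (Finset.univ : Finset (Fin (k + 1))).Nonempty := Finset.univ_nonempty
  set c : ℚ := Finset.univ.inf' hne s with hcdef
  have hc_le : ∀ i, c ≤ s i := fun i => Finset.inf'_le s (Finset.mem_univ i)
  obtain ⟨i0, _, hi0⟩ := Finset.exists_mem_eq_inf' hne s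
  have hc_pos : 0 < c := by rw [hcdef, hi0]; exact hspos i0
  set E : ℚ := ∑ i, ∑ j, |B i j| with hEdef
  have hE0 : 0 ≤ E := Finset.sum_nonneg fun i _ => Finset.sum_nonneg fun j _ => abs_nonneg _
  have hBE : ∀ i j, |B i j| ≤ E := by
    intro i j
    have h1 : |B i j| ≤ ∑ j', |B i j'| :=
      Finset.single_le_sum (f := fun j' => |B i j'|) (fun j' _ => abs_nonneg _)
        (Finset.mem_univ j)
    have h2 : ∑ j', |B i j'| ≤ E :=
      Finset.single_le_sum (f := fun i' => ∑ j', |B i' j'|)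
        (fun i' _ => Finset.sum_nonneg fun j' _ => abs_nonneg _) (Finset.mem_univ i)
    linarith
  have hE1 : (0:ℚ) < E + 1 := by linarith
  set ρ : ℚ := c / (2 * (E + 1)) with hρdef
  have hρ_pos : 0 < ρ := div_pos hc_pos (by linarith)
  have hρE : ρ * (E + 1) = c / 2 := by
    rw [hρdef]; field_simp
  have hρB : ∀ i j, ρ * |B i j| ≤ c / 2 := by
    intro i j
    have : ρ * |B i j| ≤ ρ * (E + 1) :=
      mul_le_mul_of_nonneg_left (by linarith [hBE i j]) hρ_pos.le
    linarith [hρE]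
  set w : Fin (k + 1) → ℚ := (Qmat k).mulVec v with hwdef
  set F : ℚ := ∑ i, |w i| with hFdef
  have hF0 : 0 ≤ F := Finset.sum_nonneg fun i _ => abs_nonneg _
  have hwF : ∀ i, |w i| ≤ F :=
    fun i => Finset.single_le_sum (f := fun i' => |w i'|) (fun i' _ => abs_nonneg _)
      (Finset.mem_univ i)
  set η : ℚ := c / (2 * (F + 1)) with hηdef
  have hη_pos : 0 < η := div_pos hc_pos (by linarith)
  have hηF : η * (F + 1) = c / 2 := by
    rw [hηdef]; field_simp
  have hηw : ∀ i, η * |w i| ≤ c / 2 := by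
    intro i
    have : η * |w i| ≤ η * (F + 1) :=
      mul_le_mul_of_nonneg_left (by linarith [hwF i]) hη_pos.le
    linarith [hηF]
  set S : Matrix (Fin (k + 1)) (Fin (k + 1)) ℚ := Matrix.of (fun i _ => s i) with hSdef
  have hSmul : ∀ x : Fin (k + 1) → ℚ, S.mulVec x = (∑ j, x j) • s := by
    intro x
    ext i
    simp only [Matrix.mulVec, dotProduct, hSdef, Matrix.of_apply, Pi.smul_apply,
      smul_eq_mul]
    rw [← Finset.mul_sum, mul_comm]
  set M : Matrix (Fin (k + 1)) (Fin (k + 1)) ℚ := S + ρ • B with hMdef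
  set μ : Fin (k + 1) → ℚ := s + η • w with hμdef
  refine ⟨M, μ, η, ρ, ?_, ?_, ?_, ?_, hη_pos, hρ_pos, ?_⟩
  · intro i j
    have hMij : M i j = s i + ρ * B i j := by
      simp [hMdef, hSdef, Matrix.add_apply, Matrix.smul_apply, smul_eq_mul]
    have h1 : -(ρ * |B i j|) ≤ ρ * B i j := by
      have := neg_abs_le (B i j)
      nlinarith [hρ_pos.le]
    have := hρB i j
    have := hc_le i
    rw [hMij]; linarith
  · intro j
    have : ∑ i, M i j = ∑ i, s i + ρ * ∑ i, B i j := by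
      simp only [hMdef, Matrix.add_apply, Matrix.smul_apply, smul_eq_mul, hSdef,
        Matrix.of_apply, Finset.sum_add_distrib, Finset.mul_sum]
    rw [this, hssum]
    have hBcol : ∑ i, B i j = 0 := by
      rw [hBdef, Matrix.mul_assoc]
      exact sum_Qmat_mul (A * P) j
    rw [hBcol, mul_zero, add_zero]
  · intro i
    have hμi : μ i = s i + η * w i := by simp [hμdef, smul_eq_mul]
    have h1 : -(η * |w i|) ≤ η * w i := by
      have := neg_abs_le (w i)
      nlinarith [hη_pos.le]
    have := hηw i
    have := hc_le i
    rw [hμi]; linarith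
  · have : ∑ i, μ i = ∑ i, s i + η * ∑ i, w i := by
      simp only [hμdef, Pi.add_apply, Pi.smul_apply, smul_eq_mul, Finset.sum_add_distrib,
        Finset.mul_sum]
    rw [this, hssum, hwdef, sum_Qmat_mulVec, mul_zero, add_zero]
  · have hMs : M.mulVec s = s := by
      rw [hMdef, Matrix.add_mulVec, Matrix.smul_mulVec, hBs, smul_zero, add_zero,
        hSmul, hssum, one_smul]
    have hMQ : ∀ u : Fin k → ℚ,
        M.mulVec ((Qmat k).mulVec u) = ρ • (Qmat k).mulVec (A.mulVec u) := by
      intro u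
      rw [hMdef, Matrix.add_mulVec, Matrix.smul_mulVec, hBQ, hSmul, sum_Qmat_mulVec,
        zero_smul, zero_add]
    intro n
    induction n with
    | zero =>
      simp [hμdef, hwdef, Matrix.one_mulVec]
    | succ n ih =>
      rw [pow_succ', ← Matrix.mulVec_mulVec, ih, Matrix.mulVec_add, Matrix.mulVec_smul,
        hMs, hMQ, smul_smul, Matrix.mulVec_mulVec v A (A ^ n), ← pow_succ']
      have hsc : η * ρ ^ n * ρ = η * ρ ^ (n + 1) := by ring
      rw [hsc]
end

section
/- Let s ∈ ℚ^{k+1} be a vector with all entries strictly positive and summing to 1, and let B ∈ ℚ^{k×k}. Let Q be the (k+1)×k matrix whose top k×k block is the identity and whose last row is −1^⊤, and let Q' be the unique k×(k+1) rational matrix satisfying Q'Q = I and Q's = 0 (such a Q' exists and is unique). Suppose every entry of the matrix Q B Q' is strictly less than min_i s_i in absolute value. Then the matrix M = s · 1^⊤ + Q B Q' is column-stochastic with all entries strictly positive, and for every v ∈ ℚ^k there exist a rational η > 0 and a vector μ ∈ ℚ^{k+1} with nonnegative entries summing to 1 such that M^n μ = s + η Q B^n v for all n ≥ 0. -/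
open Matrix Filter Topology

theorem one_vecMul_Qmat (k : ℕ) : (1 : Fin (k + 1) → ℚ) ᵥ* Qmat k = 0 := by
  funext j
  have hlast : Qmat k (Fin.last k) j = -1 := by
    simp [Qmat, (Nat.ne_of_lt j.isLt).symm]
  have hcast (m : Fin k) : Qmat k m.castSucc j = if m = j then 1 else 0 := by
    simp [Qmat, Fin.val_eq_val, Nat.ne_of_lt m.isLt]
  simp [vecMul, one_dotProduct, Fin.sum_univ_castSucc, hlast, hcast]

theorem exists_pos_forall_pos_add_mul {𝕜 ι : Type*} [Field 𝕜] [LinearOrder 𝕜]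
    [IsStrictOrderedRing 𝕜] [TopologicalSpace 𝕜] [OrderTopology 𝕜] [Finite ι] (s w : ι → 𝕜)
    (hs : ∀ i, 0 < s i) : ∃ η : 𝕜, 0 < η ∧ ∀ i, 0 < s i + η * w i := by
  have hnear (i : ι) : ∀ᶠ η in 𝓝[>] (0 : 𝕜), 0 < s i + η * w i := by
    have hcont : Continuous fun η : 𝕜 => s i + η * w i := by fun_prop
    exact nhdsWithin_le_nhds <|
      continuousAt_const.eventually_lt hcont.continuousAt (by simpa using hs i)
  exact ((eventually_all.2 hnear).and self_mem_nhdsWithin).exists.imp fun _ h => ⟨h.2, h.1⟩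

section Affine

variable {R m k : Type*} [CommSemiring R] [Fintype m] [Fintype k]

theorem sum_mulVec_eq_zero {Q : Matrix m k R} (hQ : (1 : m → R) ᵥ* Q = 0) (w : k → R) :
    ∑ i, (Q *ᵥ w) i = 0 := by
  rw [← one_dotProduct, dotProduct_mulVec, hQ, zero_dotProduct]

theorem of_add_mulVec (s : m → R) (A : Matrix m m R) (x : m → R) :
    (of fun i j => s i + A i j) *ᵥ x = (∑ j, x j) • s + A *ᵥ x := by
  funext i
  simp [mulVec, dotProduct, mul_add, Finset.sum_add_distrib, Finset.mul_sum, mul_comm]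

variable {s : m → R} {A : Matrix m m R} {Q : Matrix m k R} {B : Matrix k k R}

theorem sum_add_mulVec (hs : ∑ i, s i = 1) (hQ : (1 : m → R) ᵥ* Q = 0) (w : k → R) :
    ∑ i, (s + Q *ᵥ w) i = 1 := by
  simp only [Pi.add_apply, Finset.sum_add_distrib, hs, sum_mulVec_eq_zero hQ, add_zero]

theorem of_add_mulVec_add_mulVec (hs : ∑ i, s i = 1) (hAs : A *ᵥ s = 0)
    (hQ : (1 : m → R) ᵥ* Q = 0) (hAQ : A * Q = Q * B) (w : k → R) :
    (of fun i j => s i + A i j) *ᵥ (s + Q *ᵥ w) = s + Q *ᵥ (B *ᵥ w) := by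
  rw [of_add_mulVec, sum_add_mulVec hs hQ, mulVec_add, hAs, mulVec_mulVec, hAQ,
    ← mulVec_mulVec]
  simp

theorem of_add_pow_mulVec_add_mulVec [DecidableEq m] [DecidableEq k] (hs : ∑ i, s i = 1)
    (hAs : A *ᵥ s = 0) (hQ : (1 : m → R) ᵥ* Q = 0) (hAQ : A * Q = Q * B) (w : k → R) (n : ℕ) :
    (of fun i j => s i + A i j) ^ n *ᵥ (s + Q *ᵥ w) = s + Q *ᵥ (B ^ n *ᵥ w) := by
  induction n with
  | zero => simp
  | succ n ih =>
    rw [pow_succ', ← mulVec_mulVec, ih, of_add_mulVec_add_mulVec hs hAs hQ hAQ, pow_succ' B,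
      ← mulVec_mulVec]

end Affine

/-- Let `s ∈ ℚ^(k+1)` have strictly positive entries summing to `1`, let `B ∈ ℚ^(k×k)`,
let `Q` be the matrix with identity top block and last row `-1ᵀ`, and let `Q'` be the
(unique) `k × (k+1)` rational matrix with `Q' Q = I` and `Q' s = 0`. If every entry of
`Q B Q'` is `< min_i s_i` in absolute value, then `M = s · 1ᵀ + Q B Q'` is
column-stochastic with strictly positive entries, and for every `v ∈ ℚ^k` there are a
rational `η > 0` and a distribution `μ ∈ ℚ^(k+1)` with `M^n μ = s + η Q B^n v` for
all `n`. -/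
theorem stmt14 {k : ℕ} (s : Fin (k + 1) → ℚ)
    (hspos : ∀ i, 0 < s i) (hssum : ∑ i, s i = 1)
    (B : Matrix (Fin k) (Fin k) ℚ)
    (Q' : Matrix (Fin k) (Fin (k + 1)) ℚ)
    (hQ'Q : Q' * Qmat k = 1) (hQ's : Q'.mulVec s = 0)
    (hsmall : ∀ i j i', |(Qmat k * B * Q') i j| < s i') :
    (∀ i j, 0 < s i + (Qmat k * B * Q') i j) ∧
    (∀ j, ∑ i, (s i + (Qmat k * B * Q') i j) = 1) ∧
    ∀ v : Fin k → ℚ, ∃ (η : ℚ) (μ : Fin (k + 1) → ℚ),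
      0 < η ∧ (∀ i, 0 ≤ μ i) ∧ (∑ i, μ i = 1) ∧
      ∀ n : ℕ,
        ((Matrix.of fun i j => s i + (Qmat k * B * Q') i j) ^ n).mulVec μ =
          s + η • (Qmat k).mulVec ((B ^ n).mulVec v) := by
  have hcol : (1 : Fin (k + 1) → ℚ) ᵥ* (Qmat k * B * Q') = 0 := by
    rw [← vecMul_vecMul, ← vecMul_vecMul, one_vecMul_Qmat, zero_vecMul, zero_vecMul]
  have hAs : (Qmat k * B * Q') *ᵥ s = 0 := by rw [← mulVec_mulVec, hQ's, mulVec_zero]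
  have hAQ : Qmat k * B * Q' * Qmat k = Qmat k * B := by rw [Matrix.mul_assoc, hQ'Q, Matrix.mul_one]
  refine ⟨fun i j => by linarith [neg_abs_le ((Qmat k * B * Q') i j), hsmall i j i], ?_, ?_⟩
  · intro j
    rw [Finset.sum_add_distrib, hssum, ← one_dotProduct, ← vecMul, hcol, Pi.zero_apply,
      add_zero]
  · intro v
    obtain ⟨η, hη, hμ⟩ := exists_pos_forall_pos_add_mul s (Qmat k *ᵥ v) hspos
    refine ⟨η, s + Qmat k *ᵥ (η • v), hη, fun i => ?_, ?_, fun n => ?_⟩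
    · simpa [mulVec_smul] using (hμ i).le
    · exact sum_add_mulVec hssum (one_vecMul_Qmat k) _
    · rw [of_add_pow_mulVec_add_mulVec hssum hAs (one_vecMul_Qmat k) hAQ, mulVec_smul,
        mulVec_smul]
end

section
/- Let p ∈ ℚ[X] be a monic polynomial of degree 5 whose complex roots are exactly the five distinct numbers λ, conj(λ), γ, conj(γ), ρ, where λ and γ are non-real complex numbers, ρ is real and nonzero, |λ| = |γ|, and |λ| ≠ |ρ|. Then ρ is rational, and moreover |λ|^4 is rational. -/
/-- Let `p ∈ ℚ[X]` be a monic polynomial of degree `5` whose complex roots are exactly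
the five pairwise-distinct numbers `λ, conj λ, γ, conj γ, ρ`, with `λ, γ` non-real, `ρ`
real and nonzero, `|λ| = |γ|` and `|λ| ≠ |ρ|`. Then `ρ` is rational, and moreover
`|λ|^4` is rational. -/
theorem stmt16 (p : Polynomial ℚ) (hmonic : p.Monic) (hdeg : p.natDegree = 5)
    (lam gam rho : ℂ)
    (hlam : lam.im ≠ 0) (hgam : gam.im ≠ 0) (hrho_re : rho.im = 0) (hrho0 : rho ≠ 0)
    (habs : ‖lam‖ = ‖gam‖)
    (habs' : ‖lam‖ ≠ ‖rho‖)
    (hdist : ([lam, (starRingEnd ℂ) lam, gam, (starRingEnd ℂ) gam, rho] : List ℂ).Pairwise (· ≠ ·))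
    (hroots : (p.map (algebraMap ℚ ℂ)).roots =
      ({lam, (starRingEnd ℂ) lam, gam, (starRingEnd ℂ) gam, rho} : Multiset ℂ)) :
    (∃ q : ℚ, rho = (q : ℂ)) ∧ (∃ q : ℚ, (‖lam‖) ^ 4 = (q : ℝ)) := by
  classical
  simp only [List.pairwise_cons, List.mem_cons, List.mem_singleton, List.not_mem_nil,
    forall_eq_or_imp, forall_eq, List.Pairwise.nil, and_true,
    IsEmpty.forall_iff, implies_true] at hdist
  obtain ⟨⟨d12, d13, d14, d15⟩, ⟨d23, d24, d25⟩, ⟨d34, d35⟩, d45⟩ := hdist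
  have hPmonic : (p.map (algebraMap ℚ ℂ)).Monic := hmonic.map _
  have hPne : p.map (algebraMap ℚ ℂ) ≠ 0 := hPmonic.ne_zero
  have hmem : ∀ z : ℂ,
      z ∈ ({lam, (starRingEnd ℂ) lam, gam, (starRingEnd ℂ) gam, rho} : Multiset ℂ) →
      (Polynomial.aeval z) p = 0 := by
    intro z hz
    have hz' : z ∈ (p.map (algebraMap ℚ ℂ)).roots := by rw [hroots]; exact hz
    have := (Polynomial.mem_roots hPne).1 hz'
    rwa [Polynomial.IsRoot, Polynomial.eval_map, ← Polynomial.aeval_def] at this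
  have hint : ∀ z : ℂ,
      z ∈ ({lam, (starRingEnd ℂ) lam, gam, (starRingEnd ℂ) gam, rho} : Multiset ℂ) →
      IsIntegral ℚ z := fun z hz => ⟨p, hmonic, by rw [← Polynomial.aeval_def]; exact hmem z hz⟩
  have hρint : IsIntegral ℚ rho := hint rho (by simp)
  set M : Multiset ℂ := {lam, (starRingEnd ℂ) lam, gam, (starRingEnd ℂ) gam, rho} with hM
  set f : Polynomial ℚ := minpoly ℚ rho with hf
  have hfdeg1 : f.natDegree = 1 := by
    by_contra hne
    have h2 : 2 ≤ f.natDegree := by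
      have := minpoly.natDegree_pos hρint
      rw [← hf] at this
      omega
    have hsep : f.Separable := (minpoly.irreducible hρint).separable
    have hfne : f ≠ 0 := minpoly.ne_zero hρint
    have hmapne : f.map (algebraMap ℚ ℂ) ≠ 0 :=
      (Polynomial.map_ne_zero_iff (algebraMap ℚ ℂ).injective).2 hfne
    have hnodup : (f.map (algebraMap ℚ ℂ)).roots.Nodup :=
      Polynomial.nodup_roots (hsep.map)
    have hcard : f.natDegree = Multiset.card (f.map (algebraMap ℚ ℂ)).roots :=
      by rw [← Polynomial.natDegree_map (algebraMap ℚ ℂ)]; exact (IsAlgClosed.splits _).natDegree_eq_card_roots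
    have hρroot : rho ∈ (f.map (algebraMap ℚ ℂ)).roots := by
      rw [Polynomial.mem_roots hmapne]
      rw [Polynomial.IsRoot, Polynomial.eval_map, ← Polynomial.aeval_def]
      exact minpoly.aeval ℚ rho
    have hcard' : ((f.map (algebraMap ℚ ℂ)).roots.erase rho) ≠ 0 := by
      rw [← Multiset.card_pos]
      have hce := Multiset.card_erase_of_mem hρroot
      rw [Nat.pred_eq_sub_one] at hce
      rw [hce]
      omega
    obtain ⟨β, hβ⟩ := Multiset.exists_mem_of_ne_zero hcard'
    have hβne : β ≠ rho := (hnodup.mem_erase_iff.1 hβ).1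
    have hβroot : β ∈ (f.map (algebraMap ℚ ℂ)).roots := (hnodup.mem_erase_iff.1 hβ).2
    have hβaev : (Polynomial.aeval β) f = 0 := by
      have := (Polynomial.mem_roots hmapne).1 hβroot
      rwa [Polynomial.IsRoot, Polynomial.eval_map, ← Polynomial.aeval_def] at this
    have hfdvd : f ∣ p := minpoly.dvd ℚ rho (hmem rho (by simp [hM]))
    have hβM : β ∈ M := by
      rw [← hroots, Polynomial.mem_roots hPne]
      obtain ⟨g, hg⟩ := hfdvd
      rw [Polynomial.IsRoot, hg, Polynomial.map_mul, Polynomial.eval_mul]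
      have : Polynomial.eval β (f.map (algebraMap ℚ ℂ)) = 0 := by
        rw [Polynomial.eval_map, ← Polynomial.aeval_def]; exact hβaev
      rw [this, zero_mul]
    -- the embedding
    have hK : ∀ s ∈ (↑M.toFinset : Set ℂ), IsIntegral ℚ s ∧
        ((minpoly ℚ s).map (algebraMap ℚ ℂ)).Splits := by
      intro s hs
      simp only [Multiset.mem_toFinset, Finset.coe_sort_coe, Finset.mem_coe] at hs
      exact ⟨hint s hs, IsAlgClosed.splits _⟩
    have hxmem : ∀ z ∈ M, z ∈ IntermediateField.adjoin ℚ (↑M.toFinset : Set ℂ) := by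
      intro z hz
      exact IntermediateField.subset_adjoin ℚ _ (by simpa using hz)
    have hx : rho ∈ IntermediateField.adjoin ℚ (↑M.toFinset : Set ℂ) :=
      hxmem rho (by simp [hM])
    obtain ⟨φ, hφ⟩ := IntermediateField.exists_algHom_adjoin_of_splits_of_aeval hK hx hβaev
    have hinj : Function.Injective φ := φ.toRingHom.injective
    have mlam : lam ∈ IntermediateField.adjoin ℚ (↑M.toFinset : Set ℂ) :=
      hxmem lam (by simp [hM])
    have mlam' : (starRingEnd ℂ) lam ∈ IntermediateField.adjoin ℚ (↑M.toFinset : Set ℂ) :=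
      hxmem _ (by simp [hM])
    have mgam : gam ∈ IntermediateField.adjoin ℚ (↑M.toFinset : Set ℂ) :=
      hxmem gam (by simp [hM])
    have mgam' : (starRingEnd ℂ) gam ∈ IntermediateField.adjoin ℚ (↑M.toFinset : Set ℂ) :=
      hxmem _ (by simp [hM])
    -- images of roots are roots
    have him : ∀ (z : ℂ) (hz : z ∈ IntermediateField.adjoin ℚ (↑M.toFinset : Set ℂ)),
        (Polynomial.aeval z) p = 0 → φ ⟨z, hz⟩ ∈ M := by
      intro z hz h0
      have h1 : (Polynomial.aeval (⟨z, hz⟩ : IntermediateField.adjoin ℚ (↑M.toFinset : Set ℂ))) p = 0 := by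
        apply (algebraMap (IntermediateField.adjoin ℚ (↑M.toFinset : Set ℂ)) ℂ).injective
        rw [map_zero, ← Polynomial.aeval_algebraMap_apply]
        exact h0
      have h2 : (Polynomial.aeval (φ ⟨z, hz⟩)) p = 0 := by
        rw [Polynomial.aeval_algHom_apply, h1, map_zero]
      have h3 : φ ⟨z, hz⟩ ∈ (p.map (algebraMap ℚ ℂ)).roots := by
        rw [Polynomial.mem_roots hPne, Polynomial.IsRoot, Polynomial.eval_map,
          ← Polynomial.aeval_def]
        exact h2
      rw [hroots] at h3
      exact h3
    set y1 := φ ⟨lam, mlam⟩ with hy1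
    set y2 := φ ⟨(starRingEnd ℂ) lam, mlam'⟩ with hy2
    set y3 := φ ⟨gam, mgam⟩ with hy3
    set y4 := φ ⟨(starRingEnd ℂ) gam, mgam'⟩ with hy4
    have hy1M : y1 ∈ M := him _ _ (hmem lam (by simp [hM]))
    have hy2M : y2 ∈ M := him _ _ (hmem _ (by simp [hM]))
    have hy3M : y3 ∈ M := him _ _ (hmem gam (by simp [hM]))
    have hy4M : y4 ∈ M := him _ _ (hmem _ (by simp [hM]))
    -- distinctness of images
    have hinj2 : ∀ (a b : ℂ) (ha : a ∈ IntermediateField.adjoin ℚ (↑M.toFinset : Set ℂ))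
        (hb : b ∈ IntermediateField.adjoin ℚ (↑M.toFinset : Set ℂ)), a ≠ b →
        φ ⟨a, ha⟩ ≠ φ ⟨b, hb⟩ := by
      intro a b ha hb hab hc
      exact hab (congrArg Subtype.val (hinj hc))
    -- the multiplicative relation
    have hrel : y1 * y2 = y3 * y4 := by
      rw [hy1, hy2, hy3, hy4, ← map_mul, ← map_mul]
      congr 1
      apply Subtype.ext
      push_cast [MulMemClass.coe_mul]
      rw [Complex.mul_conj, Complex.mul_conj]
      norm_cast
      rw [← Complex.sq_norm, ← Complex.sq_norm, habs]
    -- distinctness of the images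
    have y12 : y1 ≠ y2 := hinj2 _ _ _ _ d12
    have y13 : y1 ≠ y3 := hinj2 _ _ _ _ d13
    have y14 : y1 ≠ y4 := hinj2 _ _ _ _ d14
    have y23 : y2 ≠ y3 := hinj2 _ _ _ _ d23
    have y24 : y2 ≠ y4 := hinj2 _ _ _ _ d24
    have y34 : y3 ≠ y4 := hinj2 _ _ _ _ d34
    have y1β : y1 ≠ β := by rw [← hφ]; exact hinj2 _ _ _ _ d15
    have y2β : y2 ≠ β := by rw [← hφ]; exact hinj2 _ _ _ _ d25
    have y3β : y3 ≠ β := by rw [← hφ]; exact hinj2 _ _ _ _ d35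
    have y4β : y4 ≠ β := by rw [← hφ]; exact hinj2 _ _ _ _ d45
    -- lam nonzero
    have hlam0 : lam ≠ 0 := fun h => hlam (by rw [h]; simp)
    have hA : ‖lam‖ ≠ 0 := norm_ne_zero_iff.mpr hlam0
    -- all nonreal roots have the same absolute value
    have habsroot : ∀ z : ℂ, z ∈ M → z ≠ rho → ‖z‖ = ‖lam‖ := by
      intro z hz hzr
      rw [hM] at hz
      simp only [Multiset.insert_eq_cons, Multiset.mem_cons, Multiset.mem_singleton] at hz
      rcases hz with h | h | h | h | h
      · rw [h]
      · rw [h, Complex.norm_conj]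
      · rw [h, ← habs]
      · rw [h, Complex.norm_conj, ← habs]
      · exact absurd h hzr
    -- pigeonhole : one of the four images must be rho
    have hrhoy : rho = y1 ∨ rho = y2 ∨ rho = y3 ∨ rho = y4 := by
      by_contra hcon
      push_neg at hcon
      obtain ⟨n1, n2, n3, n4⟩ := hcon
      have hβ4 : β ∈ ({lam, (starRingEnd ℂ) lam, gam, (starRingEnd ℂ) gam} : Finset ℂ) := by
        rw [hM] at hβM
        simp only [Multiset.insert_eq_cons, Multiset.mem_cons, Multiset.mem_singleton] at hβM
        rcases hβM with h | h | h | h | h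
        · simp [h]
        · simp [h]
        · simp [h]
        · simp [h]
        · exact absurd h hβne
      have hyT : ∀ y : ℂ, y ∈ M → y ≠ rho → y ≠ β →
          y ∈ ({lam, (starRingEnd ℂ) lam, gam, (starRingEnd ℂ) gam} : Finset ℂ).erase β := by
        intro y hy hyr hyβ
        rw [Finset.mem_erase]
        refine ⟨hyβ, ?_⟩
        rw [hM] at hy
        simp only [Multiset.insert_eq_cons, Multiset.mem_cons, Multiset.mem_singleton] at hy
        rcases hy with h | h | h | h | h
        · simp [h]
        · simp [h]
        · simp [h]
        · simp [h]
        · exact absurd h hyr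
      have hsub : ({y1, y2, y3, y4} : Finset ℂ) ⊆
          ({lam, (starRingEnd ℂ) lam, gam, (starRingEnd ℂ) gam} : Finset ℂ).erase β := by
        intro z hz
        simp only [Finset.mem_insert, Finset.mem_singleton] at hz
        rcases hz with h | h | h | h
        · rw [h]; exact hyT y1 hy1M (fun hh => n1 hh.symm) y1β
        · rw [h]; exact hyT y2 hy2M (fun hh => n2 hh.symm) y2β
        · rw [h]; exact hyT y3 hy3M (fun hh => n3 hh.symm) y3β
        · rw [h]; exact hyT y4 hy4M (fun hh => n4 hh.symm) y4β
      have hc4 : ({y1, y2, y3, y4} : Finset ℂ).card = 4 := by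
        rw [Finset.card_insert_of_notMem (by simp [y12, y13, y14]),
          Finset.card_insert_of_notMem (by simp [y23, y24]),
          Finset.card_insert_of_notMem (by simp [y34]), Finset.card_singleton]
      have hcS : ({lam, (starRingEnd ℂ) lam, gam, (starRingEnd ℂ) gam} : Finset ℂ).card = 4 := by
        rw [Finset.card_insert_of_notMem (by simp [d12, d13, d14]),
          Finset.card_insert_of_notMem (by simp [d23, d24]),
          Finset.card_insert_of_notMem (by simp [d34]), Finset.card_singleton]
      have hcT := Finset.card_erase_of_mem hβ4
      rw [hcS] at hcT
      have hle := Finset.card_le_card hsub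
      rw [hc4, hcT] at hle
      omega
    -- final contradiction via absolute values
    have e := congrArg (‖·‖) hrel
    rw [norm_mul, norm_mul] at e
    rcases hrhoy with h | h | h | h
    · have a2 : ‖y2‖ = ‖lam‖ :=
        habsroot y2 hy2M (fun hh => y12 (h ▸ hh.symm ▸ rfl))
      have a3 : ‖y3‖ = ‖lam‖ :=
        habsroot y3 hy3M (fun hh => y13 (h ▸ hh.symm ▸ rfl))
      have a4 : ‖y4‖ = ‖lam‖ :=
        habsroot y4 hy4M (fun hh => y14 (h ▸ hh.symm ▸ rfl))
      rw [← h, a2, a3, a4] at e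
      exact habs' (mul_right_cancel₀ hA e.symm)
    · have a1 : ‖y1‖ = ‖lam‖ :=
        habsroot y1 hy1M (fun hh => y12 (h ▸ hh ▸ rfl))
      have a3 : ‖y3‖ = ‖lam‖ :=
        habsroot y3 hy3M (fun hh => y23 (h ▸ hh.symm ▸ rfl))
      have a4 : ‖y4‖ = ‖lam‖ :=
        habsroot y4 hy4M (fun hh => y24 (h ▸ hh.symm ▸ rfl))
      rw [← h, a1, a3, a4] at e
      rw [mul_comm] at e
      exact habs' (mul_right_cancel₀ hA e.symm)
    · have a1 : ‖y1‖ = ‖lam‖ :=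
        habsroot y1 hy1M (fun hh => y13 (h ▸ hh ▸ rfl))
      have a2 : ‖y2‖ = ‖lam‖ :=
        habsroot y2 hy2M (fun hh => y23 (h ▸ hh ▸ rfl))
      have a4 : ‖y4‖ = ‖lam‖ :=
        habsroot y4 hy4M (fun hh => y34 (h ▸ hh.symm ▸ rfl))
      rw [← h, a1, a2, a4] at e
      exact habs' (mul_right_cancel₀ hA e)
    · have a1 : ‖y1‖ = ‖lam‖ :=
        habsroot y1 hy1M (fun hh => y14 (h ▸ hh ▸ rfl))
      have a2 : ‖y2‖ = ‖lam‖ :=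
        habsroot y2 hy2M (fun hh => y24 (h ▸ hh ▸ rfl))
      have a3 : ‖y3‖ = ‖lam‖ :=
        habsroot y3 hy3M (fun hh => y34 (h ▸ hh ▸ rfl))
      rw [← h, a1, a2, a3] at e
      rw [mul_comm (‖lam‖) (‖rho‖)] at e
      exact habs' (mul_right_cancel₀ hA e)



  -- rho is rational
  have hfmonic : f.Monic := minpoly.monic hρint
  have hco1 : f.coeff 1 = 1 := by
    have := hfmonic
    rw [Polynomial.Monic, Polynomial.leadingCoeff, hfdeg1] at this
    exact this
  have hfeq := Polynomial.eq_X_add_C_of_natDegree_le_one (le_of_eq hfdeg1)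
  have haev : (Polynomial.aeval rho) f = 0 := minpoly.aeval ℚ rho
  rw [hfeq, hco1] at haev
  simp only [map_add, map_mul, Polynomial.aeval_X, Polynomial.aeval_C, map_one, one_mul] at haev
  have hrhoq : rho = ((-f.coeff 0 : ℚ) : ℂ) := by
    push_cast
    have : (algebraMap ℚ ℂ) (f.coeff 0) = ((f.coeff 0 : ℚ) : ℂ) := by norm_cast
    rw [this] at haev
    linear_combination haev
  set q : ℚ := -f.coeff 0 with hq
  refine ⟨⟨q, hrhoq⟩, ?_⟩
  -- second part
  have hq0 : q ≠ 0 := by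
    intro h
    rw [h] at hrhoq
    exact hrho0 (by simpa using hrhoq)
  have hcardM : Multiset.card M = 5 := by rw [hM]; rfl
  have hsplit : (p.map (algebraMap ℚ ℂ)).Splits := by
    rw [Polynomial.splits_iff_card_roots, hroots, hcardM,
      Polynomial.natDegree_map, hdeg]
  have hprod := hsplit.eq_prod_roots_of_monic hPmonic
  have he := congrArg (Polynomial.eval 0) hprod
  rw [hroots, hM] at he
  simp only [Multiset.insert_eq_cons, Multiset.map_cons, Multiset.map_singleton,
    Multiset.prod_cons, Multiset.prod_singleton, Polynomial.eval_mul, Polynomial.eval_sub,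
    Polynomial.eval_X, Polynomial.eval_C, zero_sub] at he
  have hlhs : Polynomial.eval 0 (p.map (algebraMap ℚ ℂ)) = ((p.coeff 0 : ℚ) : ℂ) := by
    rw [← Polynomial.coeff_zero_eq_eval_zero, Polynomial.coeff_map]
    norm_cast
  rw [hlhs] at he
  -- he : ↑(p.coeff 0) = (-lam) * ((-conj lam) * ((-gam) * ((-conj gam) * (-rho))))
  have hnorm : ((p.coeff 0 : ℚ) : ℂ) =
      -((Complex.normSq lam : ℝ) : ℂ) * ((Complex.normSq gam : ℝ) : ℂ) * ((q : ℝ) : ℂ) := by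
    rw [he]
    have h1 : rho = (((q : ℝ)) : ℂ) := by rw [hrhoq]; norm_cast
    rw [h1, ← Complex.mul_conj lam, ← Complex.mul_conj gam]
    ring
  have hreal : (p.coeff 0 : ℝ) = -(Complex.normSq lam * Complex.normSq gam * (q : ℝ)) := by
    have : (((p.coeff 0 : ℝ)) : ℂ) =
        ((-(Complex.normSq lam * Complex.normSq gam * (q : ℝ)) : ℝ) : ℂ) := by
      push_cast
      rw [show (((p.coeff 0 : ℚ)) : ℂ) = ((p.coeff 0 : ℝ) : ℂ) by norm_cast] at hnorm
      push_cast at hnorm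
      linear_combination hnorm
    exact_mod_cast this
  refine ⟨-(p.coeff 0) / q, ?_⟩
  have habs4 : (‖lam‖) ^ 4 = Complex.normSq lam * Complex.normSq gam := by
    have h1 : (‖lam‖) ^ 2 = Complex.normSq lam := Complex.sq_norm lam
    have h2 : (‖lam‖) ^ 2 = Complex.normSq gam := by
      rw [habs]; exact Complex.sq_norm gam
    have hnsg : Complex.normSq gam = Complex.normSq lam := by rw [← h1, ← h2]
    rw [hnsg, ← h1]; ring
  rw [habs4]
  have hq0' : ((q : ℝ)) ≠ 0 := by exact_mod_cast hq0
  have hfin : Complex.normSq lam * Complex.normSq gam = -(p.coeff 0 : ℝ) / (q : ℝ) := by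
    rw [hreal]; field_simp
  rw [hfin]
  push_cast
  ring
end
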